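/- Let N ≥ 21 be an integer, set n = 2N² and p = 2/N, and let Y be any random n×n matrix with entries in {0,1} that is p-robust. Then the probability that Y has no perfect matching (no permutation σ of {1,…,n} with the (σ(j),j) entry equal to 1 for all j) is at most e^{−N}. -/

import Mathlib

/-!
If the matrix has no perfect matching, Hall's theorem yields an all-zero block of `r` rows and
`c` columns with `r + c = n + 1`. Revealing the entries of a fixed set of `k` positions in
row-major order, robustness makes each one `0` with conditional probability at most `1 - p`, so
the block is all zero with probability at most `(1 - p)^(r c)`. Since `max r c > n / 2`, a union
bound over the blocks gives `P(no perfect matching) ≤ n² (1 - p)^⌊n/2⌋`; for `n = 2N²` and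
`p = 2/N` this is at most `4N⁴ e^{-2N} ≤ e^{-N}`.
-/

open MeasureTheory Finset

theorem exists_zero_block_of_not_exists_perm {ι : Type*} [Fintype ι] (ω : ι → ι → Bool)
    (h : ¬ ∃ σ : Equiv.Perm ι, ∀ j, ω (σ j) j = true) :
    ∃ R S : Finset ι, R.card + S.card = Fintype.card ι + 1 ∧
      ∀ r ∈ R, ∀ c ∈ S, ω r c = false := by
  classical
  set t : ι → Finset ι := fun c => univ.filter (ω · c = true)
  obtain ⟨S, hS⟩ : ∃ S : Finset ι, (S.biUnion t).card < S.card := by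
    by_contra! hall
    obtain ⟨f, hf, hft⟩ := (all_card_le_biUnion_card_iff_exists_injective t).1 hall
    exact h ⟨Equiv.ofBijective f (Finite.injective_iff_bijective.1 hf), fun j => by
      simpa [t] using hft j⟩
  have hcompl : Fintype.card ι + 1 - S.card ≤ (S.biUnion t)ᶜ.card := by
    rw [card_compl]
    omega
  obtain ⟨R, hR, hRcard⟩ := exists_subset_card_eq hcompl
  refine ⟨R, S, by have := S.card_le_univ; omega, fun r hr c hc => ?_⟩
  have : r ∉ t c := fun hrc => mem_compl.1 (hR hr) (mem_biUnion.2 ⟨c, hc, hrc⟩)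
  simpa [t] using this

theorem choose_mul_choose_le_pow {n a b : ℕ} (ha : 1 ≤ a) (hsum : a + b = n + 1) :
    n.choose a * n.choose b ≤ n ^ (2 * a - 1) :=
  calc n.choose a * n.choose b = n.choose a * n.choose (a - 1) := by
        rw [← Nat.choose_symm (by omega : b ≤ n)]; congr 2; omega
    _ ≤ n ^ a * n ^ (a - 1) := Nat.mul_le_mul (Nat.choose_le_pow _ _) (Nat.choose_le_pow _ _)
    _ = n ^ (2 * a - 1) := by rw [← pow_add]; congr 1; omega

theorem choose_mul_choose_mul_pow_le {n a b : ℕ} {x : ℝ} (hx0 : 0 ≤ x) (hx1 : x ≤ 1)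
    (ha : 1 ≤ a) (hab : a ≤ b) (hsum : a + b = n + 1) :
    n.choose a * n.choose b * x ^ (a * b) ≤ (n ^ 2 * x ^ (n / 2)) ^ a / n := by
  have hn : (0 : ℝ) < n := by exact_mod_cast (by omega : 0 < n)
  rw [le_div_iff₀ hn]
  calc (n.choose a * n.choose b : ℝ) * x ^ (a * b) * n
      ≤ n ^ (2 * a - 1) * x ^ (a * (n / 2)) * n := by
        have hchoose : (n.choose a * n.choose b : ℝ) ≤ n ^ (2 * a - 1) := by
          exact_mod_cast choose_mul_choose_le_pow ha hsum
        have hx : x ^ (a * b) ≤ x ^ (a * (n / 2)) :=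
          pow_le_pow_of_le_one hx0 hx1 (Nat.mul_le_mul_left _ (by omega))
        gcongr ?_ * _
        exact mul_le_mul hchoose hx (by positivity) (by positivity)
    _ = (n ^ 2 * x ^ (n / 2)) ^ a := by
        rw [mul_right_comm, ← pow_succ, mul_pow, ← pow_mul, ← pow_mul, mul_comm (n / 2)]
        congr 2
        omega

theorem sum_choose_mul_choose_mul_pow_le {n : ℕ} {x : ℝ} (hx0 : 0 ≤ x) (hx1 : x ≤ 1)
    (hy : (n : ℝ) ^ 2 * x ^ (n / 2) ≤ 1) :
    ∑ a ∈ Icc 1 n, (n.choose a * n.choose (n + 1 - a) * x ^ (a * (n + 1 - a)) : ℝ) ≤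
      n ^ 2 * x ^ (n / 2) := by
  set y := (n : ℝ) ^ 2 * x ^ (n / 2)
  have hy0 : 0 ≤ y := by positivity
  have hterm : ∀ a ∈ Icc 1 n,
      (n.choose a * n.choose (n + 1 - a) * x ^ (a * (n + 1 - a)) : ℝ) ≤ y / n := by
    intro a ha
    rw [mem_Icc] at ha
    rcases le_total a (n + 1 - a) with h | h
    · calc _ ≤ y ^ a / n := choose_mul_choose_mul_pow_le hx0 hx1 ha.1 h (by omega)
        _ ≤ y / n := by gcongr; exact pow_le_of_le_one hy0 hy (by omega)
    · calc _ = (n.choose (n + 1 - a) * n.choose a * x ^ ((n + 1 - a) * a) : ℝ) := by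
            rw [mul_comm (n.choose a : ℝ), mul_comm a]
        _ ≤ y ^ (n + 1 - a) / n := choose_mul_choose_mul_pow_le hx0 hx1 (by omega) h (by omega)
        _ ≤ y / n := by gcongr; exact pow_le_of_le_one hy0 hy (by omega)
  calc _ ≤ (Icc 1 n).card • (y / n) := sum_le_card_nsmul _ _ _ hterm
    _ ≤ y := by
      rw [Nat.card_Icc, add_tsub_cancel_right, nsmul_eq_mul]
      rcases n.eq_zero_or_pos with rfl | hn
      · simpa using hy0
      · rw [mul_div_cancel₀ _ (by positivity)]

def IsRobust {n : ℕ} (p : ℝ) (μ : Measure (Fin n → Fin n → Bool)) : Prop :=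
  ∀ (i j : Fin n) (T : Finset (Fin n × Fin n)),
    (∀ q ∈ T, q.1 < i ∨ (q.1 = i ∧ q.2 < j)) →
    ∀ a : Fin n × Fin n → Bool,
      μ {ω | ∀ q ∈ T, ω q.1 q.2 = a q} ≠ 0 →
      ENNReal.ofReal p * μ {ω | ∀ q ∈ T, ω q.1 q.2 = a q} ≤
        μ ({ω | ω i j = true} ∩ {ω | ∀ q ∈ T, ω q.1 q.2 = a q})

namespace IsRobust

variable {n : ℕ} {p : ℝ} {μ : Measure (Fin n → Fin n → Bool)}

theorem measure_eq_false_inter_le [IsFiniteMeasure μ] (hμ : IsRobust p μ) {i j : Fin n}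
    {T : Finset (Fin n × Fin n)} (hT : ∀ q ∈ T, q.1 < i ∨ (q.1 = i ∧ q.2 < j))
    (a : Fin n × Fin n → Bool) :
    μ ({ω | ω i j = false} ∩ {ω | ∀ q ∈ T, ω q.1 q.2 = a q}) ≤
      ENNReal.ofReal (1 - p) * μ {ω | ∀ q ∈ T, ω q.1 q.2 = a q} := by
  set E := {ω : Fin n → Fin n → Bool | ∀ q ∈ T, ω q.1 q.2 = a q}
  by_cases hE : μ E = 0
  · exact (measure_mono Set.inter_subset_right).trans (by simp [hE])
  have hsplit : μ ({ω | ω i j = true} ∩ E) + μ ({ω | ω i j = false} ∩ E) = μ E := by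
    rw [← measure_inter_add_sdiff E (.of_discrete : MeasurableSet {ω | ω i j = true})]
    congr 2
    · exact Set.inter_comm _ _
    · ext ω
      simp [and_comm]
  refine (ENNReal.add_le_add_iff_left (by finiteness : ENNReal.ofReal p * μ E ≠ ⊤)).1 ?_
  calc ENNReal.ofReal p * μ E + μ ({ω | ω i j = false} ∩ E)
      ≤ μ ({ω | ω i j = true} ∩ E) + μ ({ω | ω i j = false} ∩ E) := by
        gcongr
        exact hμ i j T hT a hE
    _ = μ E := hsplit
    _ ≤ (ENNReal.ofReal p + ENNReal.ofReal (1 - p)) * μ E := by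
        refine le_mul_of_one_le_left' ?_
        simpa using ENNReal.ofReal_add_le (p := p) (q := 1 - p)
    _ = _ := add_mul _ _ _

theorem measure_forall_eq_false_le [IsProbabilityMeasure μ] (hμ : IsRobust p μ)
    (T : Finset (Fin n × Fin n)) :
    μ {ω | ∀ q ∈ T, ω q.1 q.2 = false} ≤ ENNReal.ofReal (1 - p) ^ T.card := by
  induction T using Finset.strongInduction with
  | _ T ih =>
  rcases T.eq_empty_or_nonempty with rfl | hne
  · simp
  obtain ⟨q₀, hq₀, hmax⟩ := T.exists_max_image toLex hne
  have hprec : ∀ q ∈ T.erase q₀, q.1 < q₀.1 ∨ (q.1 = q₀.1 ∧ q.2 < q₀.2) := fun q hq =>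
    Prod.Lex.lt_iff.1 <| (hmax q (mem_of_mem_erase hq)).lt_of_ne <|
      toLex.injective.ne (ne_of_mem_erase hq)
  have hpeel : {ω : Fin n → Fin n → Bool | ∀ q ∈ T, ω q.1 q.2 = false} =
      {ω | ω q₀.1 q₀.2 = false} ∩ {ω | ∀ q ∈ T.erase q₀, ω q.1 q.2 = false} := by
    ext ω
    simp only [Set.mem_inter_iff, Set.mem_ofPred_eq, mem_erase]
    refine ⟨fun h => ⟨h q₀ hq₀, fun q hq => h q hq.2⟩, fun ⟨h₀, h⟩ q hq => ?_⟩
    by_cases hq' : q = q₀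
    · exact hq' ▸ h₀
    · exact h q ⟨hq', hq⟩
  calc _ ≤ ENNReal.ofReal (1 - p) * μ {ω | ∀ q ∈ T.erase q₀, ω q.1 q.2 = false} :=
        hpeel ▸ hμ.measure_eq_false_inter_le hprec fun _ => false
    _ ≤ ENNReal.ofReal (1 - p) * ENNReal.ofReal (1 - p) ^ (T.erase q₀).card := by
        gcongr
        exact ih _ (erase_ssubset hq₀)
    _ = ENNReal.ofReal (1 - p) ^ T.card := by rw [← pow_succ', card_erase_add_one hq₀]

theorem measure_not_exists_perm_le_sum [IsProbabilityMeasure μ] (hμ : IsRobust p μ)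
    (hp : p ≤ 1) :
    μ {ω | ¬ ∃ σ : Equiv.Perm (Fin n), ∀ j, ω (σ j) j = true} ≤
      ENNReal.ofReal (∑ a ∈ Icc 1 n,
        (n.choose a * n.choose (n + 1 - a) * (1 - p) ^ (a * (n + 1 - a)) : ℝ)) := by
  have hq : 0 ≤ 1 - p := sub_nonneg.2 hp
  set Z : Finset (Fin n) → Finset (Fin n) → Set (Fin n → Fin n → Bool) :=
    fun R S => {ω | ∀ q ∈ R ×ˢ S, ω q.1 q.2 = false}
  have hcover : {ω | ¬ ∃ σ : Equiv.Perm (Fin n), ∀ j, ω (σ j) j = true} ⊆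
      ⋃ a ∈ Icc 1 n, ⋃ S ∈ powersetCard a univ, ⋃ R ∈ powersetCard (n + 1 - a) univ, Z R S := by
    intro ω hω
    obtain ⟨R, S, hcard, hzero⟩ := exists_zero_block_of_not_exists_perm ω hω
    have hR := R.card_le_univ
    have hS := S.card_le_univ
    simp only [Fintype.card_fin] at hcard hR hS
    simp only [Set.mem_iUnion, mem_Icc, mem_powersetCard, subset_univ, true_and]
    exact ⟨S.card, ⟨by omega, hS⟩, S, rfl, R, by omega,
      fun q hq => hzero q.1 (mem_product.1 hq).1 q.2 (mem_product.1 hq).2⟩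
  calc _ ≤ μ (⋃ a ∈ Icc 1 n, ⋃ S ∈ powersetCard a univ,
        ⋃ R ∈ powersetCard (n + 1 - a) univ, Z R S) := measure_mono hcover
    _ ≤ ∑ a ∈ Icc 1 n, ∑ S ∈ powersetCard a univ, ∑ R ∈ powersetCard (n + 1 - a) univ,
        μ (Z R S) :=
      (measure_biUnion_finset_le _ _).trans <| sum_le_sum fun _ _ =>
        (measure_biUnion_finset_le _ _).trans <| sum_le_sum fun _ _ =>
          measure_biUnion_finset_le _ _
    _ ≤ ∑ a ∈ Icc 1 n, ∑ S ∈ powersetCard a univ, ∑ R ∈ powersetCard (n + 1 - a) univ,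
        ENNReal.ofReal (1 - p) ^ (a * (n + 1 - a)) := by
      gcongr with a _ S hS R hR
      rw [mem_powersetCard] at hS hR
      calc μ (Z R S) ≤ ENNReal.ofReal (1 - p) ^ (R ×ˢ S).card :=
            hμ.measure_forall_eq_false_le _
        _ = _ := by rw [card_product, hR.2, hS.2, mul_comm]
    _ = _ := by
      rw [ENNReal.ofReal_sum_of_nonneg fun a _ => by positivity]
      refine sum_congr rfl fun a _ => ?_
      rw [ENNReal.ofReal_mul (by positivity), ENNReal.ofReal_mul (by positivity),
        ENNReal.ofReal_pow hq]
      simp [card_powersetCard, mul_assoc]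

theorem measure_not_exists_perm_le [IsProbabilityMeasure μ] (hμ : IsRobust p μ)
    (hp0 : 0 ≤ p) (hp1 : p ≤ 1) :
    μ {ω | ¬ ∃ σ : Equiv.Perm (Fin n), ∀ j, ω (σ j) j = true} ≤
      ENNReal.ofReal (n ^ 2 * (1 - p) ^ (n / 2)) := by
  by_cases hy : (n : ℝ) ^ 2 * (1 - p) ^ (n / 2) ≤ 1
  · exact (hμ.measure_not_exists_perm_le_sum hp1).trans <| ENNReal.ofReal_le_ofReal <|
      sum_choose_mul_choose_mul_pow_le (by linarith) (by linarith) hy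
  · exact prob_le_one.trans (ENNReal.one_le_ofReal.2 (le_of_not_ge hy))

end IsRobust

theorem four_mul_pow_four_le_exp {N : ℕ} (hN : 21 ≤ N) : 4 * (N : ℝ) ^ 4 ≤ Real.exp N := by
  have hN' : (21 : ℝ) ≤ N := by exact_mod_cast hN
  refine le_trans ?_ (Real.pow_div_factorial_le_exp N (by positivity) 9)
  rw [le_div_iff₀ (by positivity)]
  have h5 : (21 : ℝ) ^ 5 ≤ (N : ℝ) ^ 5 := by gcongr
  norm_num [Nat.factorial]
  nlinarith [pow_nonneg (by positivity : (0 : ℝ) ≤ N) 4]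

/-- **Failure probability of Algorithm 1's matrix**: let `N ≥ 21`, set `n = 2N²` and
`p = 2/N`, and let `μ` be the joint law of a random `n×n` 0–1 matrix (encoded as
`ω : Fin n → Fin n → Bool`) which is `p`-robust: every entry equals `1` with
(conditional) probability at least `p`, given any positive-probability assignment of
values to any collection of entries preceding it in row-major order (and in particular
unconditionally, taking the empty collection).  Then the probability that the matrix
has no perfect matching is at most `e^{−N}`. -/
theorem probust_matrix_no_pm_le_exp (N : ℕ) (hN : 21 ≤ N)
    (μ : Measure (Fin (2 * N ^ 2) → Fin (2 * N ^ 2) → Bool)) [IsProbabilityMeasure μ]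
    -- `μ` is `p`-robust with `p = 2/N` (row-major precedence)
    (hrob : ∀ (i j : Fin (2 * N ^ 2)) (T : Finset (Fin (2 * N ^ 2) × Fin (2 * N ^ 2))),
      (∀ q ∈ T, q.1 < i ∨ (q.1 = i ∧ q.2 < j)) →
      ∀ a : Fin (2 * N ^ 2) × Fin (2 * N ^ 2) → Bool,
        μ {ω | ∀ q ∈ T, ω q.1 q.2 = a q} ≠ 0 →
        ENNReal.ofReal (2 / (N : ℝ)) * μ {ω | ∀ q ∈ T, ω q.1 q.2 = a q} ≤
          μ ({ω | ω i j = true} ∩ {ω | ∀ q ∈ T, ω q.1 q.2 = a q})) :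
    μ {ω | ¬ ∃ σ : Equiv.Perm (Fin (2 * N ^ 2)), ∀ j, ω (σ j) j = true} ≤
      ENNReal.ofReal (Real.exp (-(N : ℝ))) := by
  have hN' : (21 : ℝ) ≤ N := by exact_mod_cast hN
  have hp : 2 / (N : ℝ) ≤ 1 := by rw [div_le_one (by positivity)]; linarith
  have hq : 0 ≤ 1 - 2 / (N : ℝ) := sub_nonneg.2 hp
  refine (IsRobust.measure_not_exists_perm_le hrob (by positivity) hp).trans <|
    ENNReal.ofReal_le_ofReal ?_
  have hpow : (1 - 2 / (N : ℝ)) ^ N ^ 2 ≤ Real.exp (-(2 * N)) :=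
    calc (1 - 2 / (N : ℝ)) ^ N ^ 2 = ((1 - 2 / N) ^ N) ^ N := by rw [← pow_mul, sq]
      _ ≤ Real.exp (-2) ^ N :=
        pow_le_pow_left₀ (pow_nonneg hq _) (Real.one_sub_div_pow_le_exp_neg (by linarith)) N
      _ = Real.exp (-(2 * N)) := by rw [← Real.exp_nat_mul]; ring_nf
  calc ((2 * N ^ 2 : ℕ) : ℝ) ^ 2 * (1 - 2 / (N : ℝ)) ^ (2 * N ^ 2 / 2)
      = 4 * (N : ℝ) ^ 4 * (1 - 2 / (N : ℝ)) ^ N ^ 2 := by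
        rw [Nat.mul_div_cancel_left _ two_pos]; push_cast; ring
    _ ≤ Real.exp N * Real.exp (-(2 * N)) :=
        mul_le_mul (four_mul_pow_four_le_exp hN) hpow (pow_nonneg hq _) (Real.exp_pos _).le
    _ = Real.exp (-N) := by rw [← Real.exp_add]; ring_nf
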